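/- arXiv:2601.10175 — 2 statements merged into one kernel-verified Lean document; each statement's English description precedes it below -/
import Mathlib

section
/- For any positive integers K and t with t < K, the MN construction yields a (t+1)-regular (K, C(K,t), C(K−1,t−1), C(K,t+1)) PDA: index rows by t-subsets T of [K] and columns by k ∈ [K]; set P(T,k)=* if k ∈ T, and otherwise set P(T,k) equal to the (t+1)-subset T ∪ {k}. This array satisfies all PDA conditions and every integer (i.e., every (t+1)-subset) appears exactly t+1 times. -/
/-!
A label determines its row from its column: `k ∉ T ∧ insert k T = A` iff `k ∈ A ∧ T = A.erase k`.
So the occurrences of a `(t+1)`-set `A` are the pairs `(A.erase k, k)` with `k ∈ A`, which gives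
regularity (hence also C2) and, for two of them, `k₂ ∈ A.erase k₁` and `k₁ ∈ A.erase k₂` (C3).
The stars of column `k` are the `t`-sets containing `{k}`.
-/

open Finset

namespace Finset

variable {α : Type*}

theorem card_filter_subtype_card_eq [Fintype α] (r : ℕ) (p : Finset α → Prop) [DecidablePred p] :
    #{T : {T : Finset α // #T = r} | p T.1} = #{T ∈ powersetCard r univ | p T} := by
  rw [← card_map (Function.Embedding.subtype _)]
  congr 1
  ext T
  simp [mem_powersetCard, and_comm]

variable [DecidableEq α]

theorem insert_eq_iff_of_notMem {a : α} {s A : Finset α} (ha : a ∉ s) :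
    insert a s = A ↔ a ∈ A ∧ s = A.erase a := by
  constructor
  · rintro rfl
    exact ⟨mem_insert_self a s, (erase_insert ha).symm⟩
  · rintro ⟨haA, rfl⟩
    exact insert_erase haA

theorem mem_of_insert_eq_insert {a b : α} {s t : Finset α} (hab : a ≠ b)
    (h : insert a s = insert b t) : b ∈ s :=
  (mem_insert.1 (h ▸ mem_insert_self b t)).resolve_left hab.symm

variable [Fintype α]

theorem card_filter_subtype_card_mem {r : ℕ} (hr : 0 < r) (k : α) :
    #{T : {T : Finset α // #T = r} | k ∈ T.1} = (Fintype.card α - 1).choose (r - 1) := by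
  refine (card_filter_subtype_card_eq r (k ∈ ·)).trans ?_
  simpa using
    card_filter_powersetCard_subset {k} univ r (subset_univ _) (by rw [card_singleton]; exact hr)

theorem card_filter_notMem_insert_eq {r : ℕ} {A : Finset α} (hA : #A = r + 1) :
    #{p : {T : Finset α // #T = r} × α | p.2 ∉ p.1.1 ∧ insert p.2 p.1.1 = A} = r + 1 := by
  rw [← hA]
  refine card_bij (fun p _ => p.2) ?_ ?_ ?_
  · intro p hp
    simp only [mem_filter, mem_univ, true_and] at hp
    exact ((insert_eq_iff_of_notMem hp.1).1 hp.2).1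
  · rintro ⟨⟨T₁, _⟩, k₁⟩ hp₁ ⟨⟨T₂, _⟩, k₂⟩ hp₂ (rfl : k₁ = k₂)
    simp only [mem_filter, mem_univ, true_and] at hp₁ hp₂
    have h₁ := ((insert_eq_iff_of_notMem hp₁.1).1 hp₁.2).2
    have h₂ := ((insert_eq_iff_of_notMem hp₂.1).1 hp₂.2).2
    subst h₁ h₂
    rfl
  · intro k hk
    have hcard : #(A.erase k) = r := by rw [card_erase_of_mem hk, hA]; rfl
    exact ⟨(⟨A.erase k, hcard⟩, k), by simp [insert_erase hk], rfl⟩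

end Finset

theorem mn_pda_general (K t : ℕ) (ht : 0 < t) :
    -- C1: each column contains exactly C(K−1,t−1) stars
    (∀ k : Fin K,
      (univ.filter fun T : {T : Finset (Fin K) // T.card = t} => k ∈ T.1).card
        = Nat.choose (K - 1) (t - 1)) ∧
    -- C2: every (t+1)-subset appears at least once as an integer label
    (∀ A : Finset (Fin K), A.card = t + 1 →
      ∃ (T : {T : Finset (Fin K) // T.card = t}) (k : Fin K),
        k ∉ T.1 ∧ insert k T.1 = A) ∧
    -- C3: equal labels lie in distinct rows and columns, with stars at symmetric positions
    (∀ (T1 T2 : {T : Finset (Fin K) // T.card = t}) (k1 k2 : Fin K),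
      k1 ∉ T1.1 → k2 ∉ T2.1 → insert k1 T1.1 = insert k2 T2.1 →
      (T1, k1) ≠ (T2, k2) →
      T1 ≠ T2 ∧ k1 ≠ k2 ∧ k2 ∈ T1.1 ∧ k1 ∈ T2.1) ∧
    -- (t+1)-regularity: every (t+1)-subset appears exactly t+1 times
    (∀ A : Finset (Fin K), A.card = t + 1 →
      (univ.filter fun p : {T : Finset (Fin K) // T.card = t} × Fin K =>
        p.2 ∉ p.1.1 ∧ insert p.2 p.1.1 = A).card = t + 1) := by
  refine ⟨fun k => by simpa using card_filter_subtype_card_mem ht k, fun A hA => ?_,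
    fun T₁ T₂ k₁ k₂ h₁ h₂ hins hne => ?_, fun A hA => card_filter_notMem_insert_eq hA⟩
  · obtain ⟨⟨T, k⟩, hp⟩ := card_pos.1 (by rw [card_filter_notMem_insert_eq hA]; exact t.succ_pos)
    exact ⟨T, k, (mem_filter.1 hp).2⟩
  · have hk : k₁ ≠ k₂ := by
      rintro rfl
      refine hne (Prod.ext (Subtype.ext ?_) rfl)
      rw [← erase_insert h₁, hins, erase_insert h₂]
    have hk₂ := mem_of_insert_eq_insert hk hins
    exact ⟨fun h => h₂ (h ▸ hk₂), hk, hk₂, mem_of_insert_eq_insert hk.symm hins.symm⟩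

/-- The MN construction yields a (t+1)-regular (K, C(K,t), C(K−1,t−1), C(K,t+1)) PDA:
rows indexed by t-subsets T of [K], columns by k ∈ [K]; P(T,k)=* iff k ∈ T, else
P(T,k) = T ∪ {k}.  All PDA conditions hold and every integer appears exactly t+1 times. -/
theorem mn_pda (K t : ℕ) (ht : 0 < t) (htK : t < K) :
    -- C1: each column contains exactly C(K−1,t−1) stars
    (∀ k : Fin K,
      (univ.filter fun T : {T : Finset (Fin K) // T.card = t} => k ∈ T.1).card
        = Nat.choose (K - 1) (t - 1)) ∧
    -- C2: every (t+1)-subset appears at least once as an integer label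
    (∀ A : Finset (Fin K), A.card = t + 1 →
      ∃ (T : {T : Finset (Fin K) // T.card = t}) (k : Fin K),
        k ∉ T.1 ∧ insert k T.1 = A) ∧
    -- C3: equal labels lie in distinct rows and columns, with stars at symmetric positions
    (∀ (T1 T2 : {T : Finset (Fin K) // T.card = t}) (k1 k2 : Fin K),
      k1 ∉ T1.1 → k2 ∉ T2.1 → insert k1 T1.1 = insert k2 T2.1 →
      (T1, k1) ≠ (T2, k2) →
      T1 ≠ T2 ∧ k1 ≠ k2 ∧ k2 ∈ T1.1 ∧ k1 ∈ T2.1) ∧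
    -- (t+1)-regularity: every (t+1)-subset appears exactly t+1 times
    (∀ A : Finset (Fin K), A.card = t + 1 →
      (univ.filter fun p : {T : Finset (Fin K) // T.card = t} × Fin K =>
        p.2 ∉ p.1.1 ∧ insert p.2 p.1.1 = A).card = t + 1) :=
  mn_pda_general K t ht
end

section
/- In the MN PDA with parameters K and t, condition C3 holds: if two non-star entries satisfy T1 ∪ {k1} = T2 ∪ {k2} with (T1,k1) ≠ (T2,k2), k1 ∉ T1, k2 ∉ T2, then T1 ≠ T2, k1 ≠ k2, k2 ∈ T1 and k1 ∈ T2 (so the symmetric entries are stars). -/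
open Finset

variable {α : Type*} [DecidableEq α] {a b : α} {s u : Finset α}

theorem Finset.eq_of_insert_eq_insert_of_notMem (hs : a ∉ s) (hu : a ∉ u)
    (h : insert a s = insert a u) : s = u := by
  rw [← erase_insert hs, h, erase_insert hu]

theorem Finset.mem_of_insert_eq_insert_of_ne (hab : a ≠ b) (h : insert a s = insert b u) :
    b ∈ s :=
  mem_of_mem_insert_of_ne (h ▸ mem_insert_self b u) hab.symm

theorem mn_pda_C3_general (K : ℕ)
    (T1 T2 : Finset (Fin K))
    (k1 k2 : Fin K) (hk1 : k1 ∉ T1) (hk2 : k2 ∉ T2)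
    (hlabel : insert k1 T1 = insert k2 T2)
    (hne : (T1, k1) ≠ (T2, k2)) :
    T1 ≠ T2 ∧ k1 ≠ k2 ∧ k2 ∈ T1 ∧ k1 ∈ T2 := by
  have hk : k1 ≠ k2 := by
    rintro rfl
    exact hne (by rw [eq_of_insert_eq_insert_of_notMem hk1 hk2 hlabel])
  have hk2T1 : k2 ∈ T1 := mem_of_insert_eq_insert_of_ne hk hlabel
  have hk1T2 : k1 ∈ T2 := mem_of_insert_eq_insert_of_ne hk.symm hlabel.symm
  exact ⟨fun hT => hk2 (hT ▸ hk2T1), hk, hk2T1, hk1T2⟩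

/-- In the MN PDA, condition C3 holds: if two non-star entries share the same
(t+1)-subset label, i.e. T1 ∪ {k1} = T2 ∪ {k2} with (T1,k1) ≠ (T2,k2), k1 ∉ T1,
k2 ∉ T2, then T1 ≠ T2, k1 ≠ k2, k2 ∈ T1 and k1 ∈ T2. -/
theorem mn_pda_C3 (K t : ℕ) (ht : 0 < t) (htK : t < K)
    (T1 T2 : Finset (Fin K)) (hT1 : T1.card = t) (hT2 : T2.card = t)
    (k1 k2 : Fin K) (hk1 : k1 ∉ T1) (hk2 : k2 ∉ T2)
    (hlabel : insert k1 T1 = insert k2 T2)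
    (hne : (T1, k1) ≠ (T2, k2)) :
    T1 ≠ T2 ∧ k1 ≠ k2 ∧ k2 ∈ T1 ∧ k1 ∈ T2 :=
  mn_pda_C3_general K T1 T2 k1 k2 hk1 hk2 hlabel hne
end
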